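/- Let μ₊, μ₋ be probability measures on ℝ^Λ with densities proportional to exp(-H_±(φ)), where H_±(φ) = H₀(φ) ∓ ⟨η,φ⟩, and suppose H₀(φ+ψ) + H₀(φ-ψ) - 2H₀(φ) ≤ E(ψ) pointwise for some constant E(ψ). Let ν_± = μ_±(· + ψ) be the shifted measures. Then H(ν₊|μ₊) + H(ν₋|μ₋) ≤ 2 E(ψ); in particular each individual relative entropy is at most 2E(ψ). -/

import Mathlib

open MeasureTheory

/-- Relative entropy (Kullback–Leibler divergence) `H(ν|μ) = ∫ log (dν/dμ) dν`. -/
noncomputable def relEnt {Ω : Type*} [MeasurableSpace Ω] (ν μ : Measure Ω) : ℝ :=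
  ∫ x, Real.log ((ν.rnDeriv μ x).toReal) ∂ν

/-- The Gibbs measure on `ℝ^Λ` with Hamiltonian `H`: the probability measure with density
proportional to `exp (-H φ)` with respect to Lebesgue measure. -/
noncomputable def gibbsOf {Λ : Type*} [Fintype Λ] (H : (Λ → ℝ) → ℝ) :
    Measure (Λ → ℝ) :=
  (ENNReal.ofReal (∫ φ, Real.exp (-H φ)))⁻¹ •
    volume.withDensity (fun φ => ENNReal.ofReal (Real.exp (-H φ)))

/-!
Shifting the field by `ψ` reweights the Gibbs measure `μ = gibbsOf H` by
`exp (H φ - H (φ - ψ))`, a density of total mass one by translation invariance of Lebesgue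
measure; hence `H(ν|μ) = ∫ (H (φ + ψ) - H φ) dμ`. Since `H₀` is even, `φ ↦ -φ` carries `μ₊` to
`μ₋`, which turns the second entropy into `∫ (H₊ (φ - ψ) - H₊ φ) dμ₊`. In the sum the terms
linear in `η` cancel and the integrand is `H₀ (φ + ψ) + H₀ (φ - ψ) - 2 H₀ φ ≤ E`; Gibbs'
inequality makes both entropies nonnegative.
-/

open Real

open scoped ENNReal

section General

variable {α β : Type*} [MeasurableSpace α] [MeasurableSpace β]

lemma relEnt_nonneg {ν μ : Measure α} [IsProbabilityMeasure ν] [IsProbabilityMeasure μ]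
    (hνμ : ν ≪ μ) (h_int : Integrable (llr ν μ) ν) : 0 ≤ relEnt ν μ := by
  have h := InformationTheory.integral_llr_add_sub_measure_univ_nonneg hνμ h_int
  simp only [probReal_univ, add_sub_cancel_right] at h
  exact h

lemma llr_tilted_self_ae_eq {μ : Measure α} [SigmaFinite μ] {f : α → ℝ}
    (hf : Integrable (fun x => exp (f x)) μ) (hf_one : ∫ x, exp (f x) ∂μ = 1) :
    llr (μ.tilted f) μ =ᵐ[μ.tilted f] f := by
  refine (tilted_absolutelyContinuous μ f).ae_le ?_
  filter_upwards [log_rnDeriv_tilted_left_self hf] with x hx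
  rw [llr, hx, hf_one, log_one, sub_zero]

lemma MeasureTheory.MeasurePreserving.map_withDensity {μ : Measure α} {ν : Measure β} {e : α ≃ᵐ β}
    (he : MeasurePreserving e μ ν) (d : α → ℝ≥0∞) :
    (μ.withDensity d).map e = ν.withDensity (d ∘ e.symm) := by
  ext s hs
  rw [Measure.map_apply e.measurable hs, withDensity_apply _ (e.measurable hs),
    withDensity_apply _ hs, ← he.map_eq, e.restrict_map, lintegral_map_equiv]
  simp

end General

section Gibbs

variable {Λ : Type*} [Fintype Λ] {H : (Λ → ℝ) → ℝ}

lemma map_gibbsOf {e : (Λ → ℝ) ≃ᵐ (Λ → ℝ)} (he : MeasurePreserving e) :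
    (gibbsOf H).map e = gibbsOf (H ∘ e.symm) := by
  rw [gibbsOf, gibbsOf, Measure.map_smul, he.map_withDensity,
    ← (he.symm e).integral_comp' (fun φ => exp (-H φ))]
  rfl

lemma gibbsOf_eq_map_neg {H' : (Λ → ℝ) → ℝ} (hH' : ∀ φ, H' (-φ) = H φ) :
    gibbsOf H' = (gibbsOf H).map Neg.neg := by
  rw [← MeasurableEquiv.neg_apply, map_gibbsOf (Measure.measurePreserving_neg volume)]
  congr
  funext φ
  simp [← hH']

lemma gibbsOf_eq_tilted (hint : Integrable fun φ : Λ → ℝ => exp (-H φ)) :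
    gibbsOf H = volume.tilted fun φ => -H φ := by
  have hZ : (ENNReal.ofReal (∫ φ, exp (-H φ)))⁻¹ ≠ ∞ := by
    simpa using integral_exp_pos hint
  rw [gibbsOf, Measure.tilted, ← withDensity_smul' _ _ hZ]
  congr
  funext φ
  rw [Pi.smul_apply, smul_eq_mul, div_eq_mul_inv, ENNReal.ofReal_mul (exp_pos _).le,
    ENNReal.ofReal_inv_of_pos (integral_exp_pos hint), mul_comm]

lemma integral_gibbsOf_eq_integral_neg {H' : (Λ → ℝ) → ℝ} (hH' : ∀ φ, H' (-φ) = H φ)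
    (f : (Λ → ℝ) → ℝ) : ∫ φ, f φ ∂gibbsOf H' = ∫ φ, f (-φ) ∂gibbsOf H := by
  rw [gibbsOf_eq_map_neg hH', ← MeasurableEquiv.neg_apply, integral_map_equiv]

lemma integrable_gibbsOf_iff_neg {H' : (Λ → ℝ) → ℝ} (hH' : ∀ φ, H' (-φ) = H φ)
    {f : (Λ → ℝ) → ℝ} : Integrable f (gibbsOf H') ↔ Integrable (fun φ => f (-φ)) (gibbsOf H) := by
  rw [gibbsOf_eq_map_neg hH', ← MeasurableEquiv.neg_apply, integrable_map_equiv]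
  rfl

lemma isProbabilityMeasure_gibbsOf (hint : Integrable fun φ : Λ → ℝ => exp (-H φ)) :
    IsProbabilityMeasure (gibbsOf H) := by
  rw [gibbsOf_eq_tilted hint]
  exact isProbabilityMeasure_tilted hint

lemma map_add_gibbsOf_eq_tilted (hint : Integrable fun φ : Λ → ℝ => exp (-H φ)) (ψ : Λ → ℝ) :
    (gibbsOf H).map (· + ψ) = (gibbsOf H).tilted fun φ => H φ - H (φ - ψ) := by
  calc (gibbsOf H).map (· + ψ) = gibbsOf fun φ => H (φ - ψ) := by
        simpa [Function.comp_def, sub_eq_add_neg] using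
          map_gibbsOf (H := H) (e := MeasurableEquiv.addRight ψ)
            (measurePreserving_add_right volume ψ)
    _ = volume.tilted fun φ => -H (φ - ψ) := gibbsOf_eq_tilted (hint.comp_sub_right ψ)
    _ = (gibbsOf H).tilted fun φ => H φ - H (φ - ψ) := by
        rw [gibbsOf_eq_tilted hint, tilted_tilted hint]
        congr
        funext φ
        simp only [Pi.add_apply]
        ring

lemma integrable_exp_increment_gibbsOf (hint : Integrable fun φ : Λ → ℝ => exp (-H φ))
    (ψ : Λ → ℝ) : Integrable (fun φ => exp (H φ - H (φ - ψ))) (gibbsOf H) := by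
  rw [gibbsOf_eq_tilted hint, integrable_tilted_iff hint]
  refine (hint.comp_sub_right ψ).congr (Filter.Eventually.of_forall fun φ => ?_)
  simp only [smul_eq_mul, ← exp_add]
  ring_nf

lemma integral_exp_increment_gibbsOf (hint : Integrable fun φ : Λ → ℝ => exp (-H φ))
    (ψ : Λ → ℝ) : ∫ φ, exp (H φ - H (φ - ψ)) ∂gibbsOf H = 1 := by
  rw [gibbsOf_eq_tilted hint, integral_exp_tilted]
  have h : ∀ φ, -H φ + (H φ - H (φ - ψ)) = -H (φ - ψ) := fun φ => by ring
  simp only [Pi.add_apply, h]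
  rw [integral_sub_right_eq_self (fun φ => exp (-H φ)), div_self (integral_exp_pos hint).ne']

lemma llr_map_add_gibbsOf_ae_eq (hint : Integrable fun φ : Λ → ℝ => exp (-H φ)) (ψ : Λ → ℝ) :
    llr ((gibbsOf H).map (· + ψ)) (gibbsOf H) =ᵐ[(gibbsOf H).map (· + ψ)]
      fun φ => H φ - H (φ - ψ) := by
  have := isProbabilityMeasure_gibbsOf hint
  rw [map_add_gibbsOf_eq_tilted hint]
  exact llr_tilted_self_ae_eq (integrable_exp_increment_gibbsOf hint ψ)
    (integral_exp_increment_gibbsOf hint ψ)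

lemma relEnt_map_add_gibbsOf (hint : Integrable fun φ : Λ → ℝ => exp (-H φ)) (ψ : Λ → ℝ) :
    relEnt ((gibbsOf H).map (· + ψ)) (gibbsOf H) = ∫ φ, H (φ + ψ) - H φ ∂gibbsOf H := by
  rw [relEnt, ← llr_def, integral_congr_ae (llr_map_add_gibbsOf_ae_eq hint ψ),
    ← MeasurableEquiv.coe_addRight, integral_map_equiv]
  simp

lemma integrable_increment_gibbsOf (hint : Integrable fun φ : Λ → ℝ => exp (-H φ))
    {ψ : Λ → ℝ} (hllr : Integrable (llr ((gibbsOf H).map (· + ψ)) (gibbsOf H))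
      ((gibbsOf H).map (· + ψ))) :
    Integrable (fun φ => H (φ + ψ) - H φ) (gibbsOf H) := by
  have h := hllr.congr (llr_map_add_gibbsOf_ae_eq hint ψ)
  rw [← MeasurableEquiv.coe_addRight, integrable_map_equiv] at h
  simpa [Function.comp_def] using h

lemma relEnt_map_add_gibbsOf_nonneg (hint : Integrable fun φ : Λ → ℝ => exp (-H φ))
    {ψ : Λ → ℝ} (hllr : Integrable (llr ((gibbsOf H).map (· + ψ)) (gibbsOf H))
      ((gibbsOf H).map (· + ψ))) :
    0 ≤ relEnt ((gibbsOf H).map (· + ψ)) (gibbsOf H) := by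
  have := isProbabilityMeasure_gibbsOf hint
  have : IsProbabilityMeasure ((gibbsOf H).map (· + ψ)) :=
    Measure.isProbabilityMeasure_map (measurable_add_const ψ).aemeasurable
  refine relEnt_nonneg ?_ hllr
  rw [map_add_gibbsOf_eq_tilted hint]
  exact tilted_absolutelyContinuous _ _

end Gibbs

theorem symmetrized_entropy_bound_general {Λ : Type*} [Fintype Λ]
    (H₀ : (Λ → ℝ) → ℝ) (heven : ∀ φ, H₀ (-φ) = H₀ φ)
    (η ψ : Λ → ℝ) (E : ℝ)
    (hE : ∀ φ, H₀ (φ + ψ) + H₀ (φ - ψ) - 2 * H₀ φ ≤ E)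
    (Hp Hm : (Λ → ℝ) → ℝ)
    (hHp : ∀ φ, Hp φ = H₀ φ - ∑ i, η i * φ i)
    (hHm : ∀ φ, Hm φ = H₀ φ + ∑ i, η i * φ i)
    (hIntp : Integrable (fun φ : Λ → ℝ => Real.exp (-Hp φ)))
    (hIntm : Integrable (fun φ : Λ → ℝ => Real.exp (-Hm φ)))
    (hllrp : Integrable
      (fun φ => Real.log (((Measure.map (fun φ => φ + ψ) (gibbsOf Hp)).rnDeriv
        (gibbsOf Hp) φ).toReal)) (Measure.map (fun φ => φ + ψ) (gibbsOf Hp)))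
    (hllrm : Integrable
      (fun φ => Real.log (((Measure.map (fun φ => φ + ψ) (gibbsOf Hm)).rnDeriv
        (gibbsOf Hm) φ).toReal)) (Measure.map (fun φ => φ + ψ) (gibbsOf Hm))) :
    relEnt (Measure.map (fun φ => φ + ψ) (gibbsOf Hp)) (gibbsOf Hp)
      + relEnt (Measure.map (fun φ => φ + ψ) (gibbsOf Hm)) (gibbsOf Hm) ≤ 2 * E ∧
    relEnt (Measure.map (fun φ => φ + ψ) (gibbsOf Hp)) (gibbsOf Hp) ≤ 2 * E ∧
    relEnt (Measure.map (fun φ => φ + ψ) (gibbsOf Hm)) (gibbsOf Hm) ≤ 2 * E := by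
  have hsymm : ∀ φ, Hm (-φ) = Hp φ := fun φ => by
    simp [hHm, hHp, heven, sub_eq_add_neg]
  have hsymm_incr : ∀ φ, Hm (-φ + ψ) - Hm (-φ) = Hp (φ - ψ) - Hp φ := fun φ => by
    rw [show -φ + ψ = -(φ - ψ) by abel, hsymm, hsymm]
  have hm : relEnt ((gibbsOf Hm).map (· + ψ)) (gibbsOf Hm)
      = ∫ φ, Hp (φ - ψ) - Hp φ ∂gibbsOf Hp := by
    rw [relEnt_map_add_gibbsOf hIntm, integral_gibbsOf_eq_integral_neg hsymm]
    simp only [hsymm_incr]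
  have hm_int : Integrable (fun φ => Hp (φ - ψ) - Hp φ) (gibbsOf Hp) := by
    simpa only [hsymm_incr] using
      (integrable_gibbsOf_iff_neg hsymm).1 (integrable_increment_gibbsOf hIntm hllrm)
  have hincr : ∀ φ, (Hp (φ + ψ) - Hp φ) + (Hp (φ - ψ) - Hp φ) ≤ E := fun φ => by
    have hE_φ := hE φ
    simp only [hHp, Pi.add_apply, Pi.sub_apply, mul_add, mul_sub, Finset.sum_add_distrib,
      Finset.sum_sub_distrib]
    linarith
  have hp_int := integrable_increment_gibbsOf hIntp hllrp
  have := isProbabilityMeasure_gibbsOf hIntp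
  have hsum : relEnt ((gibbsOf Hp).map (· + ψ)) (gibbsOf Hp)
      + relEnt ((gibbsOf Hm).map (· + ψ)) (gibbsOf Hm) ≤ E := by
    rw [relEnt_map_add_gibbsOf hIntp, hm, ← integral_add hp_int hm_int]
    calc _ ≤ ∫ _, E ∂gibbsOf Hp := integral_mono (hp_int.add hm_int) (integrable_const E) hincr
      _ = E := by simp
  have hp_nonneg := relEnt_map_add_gibbsOf_nonneg hIntp hllrp
  have hm_nonneg := relEnt_map_add_gibbsOf_nonneg hIntm hllrm
  exact ⟨by linarith, by linarith, by linarith⟩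

/-- **Symmetrized entropy bound.** Let `μ₊, μ₋` be the Gibbs measures on `ℝ^Λ` with
Hamiltonians `H_±(φ) = H₀(φ) ∓ ⟨η, φ⟩` (`H₀` even), and suppose the symmetrized increment
satisfies `H₀(φ+ψ) + H₀(φ-ψ) - 2 H₀(φ) ≤ E` pointwise. Let `ν_± = μ_±(· + ψ)` be the
shifted measures. Then `H(ν₊|μ₊) + H(ν₋|μ₋) ≤ 2E`, and in particular each individual
relative entropy is at most `2E`. -/
theorem symmetrized_entropy_bound {Λ : Type*} [Fintype Λ]
    (H₀ : (Λ → ℝ) → ℝ) (hH₀ : Measurable H₀) (heven : ∀ φ, H₀ (-φ) = H₀ φ)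
    (η ψ : Λ → ℝ) (E : ℝ)
    (hE : ∀ φ, H₀ (φ + ψ) + H₀ (φ - ψ) - 2 * H₀ φ ≤ E)
    (Hp Hm : (Λ → ℝ) → ℝ)
    (hHp : ∀ φ, Hp φ = H₀ φ - ∑ i, η i * φ i)
    (hHm : ∀ φ, Hm φ = H₀ φ + ∑ i, η i * φ i)
    (hIntp : Integrable (fun φ : Λ → ℝ => Real.exp (-Hp φ)))
    (hIntm : Integrable (fun φ : Λ → ℝ => Real.exp (-Hm φ)))
    (hposp : 0 < ∫ φ : Λ → ℝ, Real.exp (-Hp φ))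
    (hposm : 0 < ∫ φ : Λ → ℝ, Real.exp (-Hm φ))
    (hllrp : Integrable
      (fun φ => Real.log (((Measure.map (fun φ => φ + ψ) (gibbsOf Hp)).rnDeriv
        (gibbsOf Hp) φ).toReal)) (Measure.map (fun φ => φ + ψ) (gibbsOf Hp)))
    (hllrm : Integrable
      (fun φ => Real.log (((Measure.map (fun φ => φ + ψ) (gibbsOf Hm)).rnDeriv
        (gibbsOf Hm) φ).toReal)) (Measure.map (fun φ => φ + ψ) (gibbsOf Hm))) :
    relEnt (Measure.map (fun φ => φ + ψ) (gibbsOf Hp)) (gibbsOf Hp)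
      + relEnt (Measure.map (fun φ => φ + ψ) (gibbsOf Hm)) (gibbsOf Hm) ≤ 2 * E ∧
    relEnt (Measure.map (fun φ => φ + ψ) (gibbsOf Hp)) (gibbsOf Hp) ≤ 2 * E ∧
    relEnt (Measure.map (fun φ => φ + ψ) (gibbsOf Hm)) (gibbsOf Hm) ≤ 2 * E :=
  symmetrized_entropy_bound_general H₀ heven η ψ E hE Hp Hm hHp hHm hIntp hIntm hllrp hllrm
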